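/- arXiv:2003.10040 — 7 statements merged into one kernel-verified Lean document; each statement's English description precedes it below -/
import Mathlib

section
/- Let f be a permutation polynomial over the finite field F_q with compositional inverse f⁻¹. Then for every b ∈ F_q* and c ∈ F_q, the equations f(x) - b·x - c = 0 and f⁻¹(x) - (1/b)·x + (c/b) = 0 have the same number of solutions in F_q. Consequently f and f⁻¹ have the same intersection distribution. -/
open Finset Polynomial
open scoped Classical

theorem stmt3 {F : Type*} [Field F] [Fintype F] (f g : Polynomial F)
    (hperm : Function.Bijective fun x : F => f.eval x)
    (hinv : ∀ x : F, g.eval (f.eval x) = x) :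
    (∀ b : F, b ≠ 0 → ∀ c : F,
      (Finset.univ.filter (fun x : F => f.eval x - b * x - c = 0)).card =
      (Finset.univ.filter (fun x : F => g.eval x - b⁻¹ * x + c / b = 0)).card) ∧
    (∀ i : ℕ,
      (Finset.univ.filter (fun bc : F × F =>
        (Finset.univ.filter (fun x : F => f.eval x = bc.1 * x + bc.2)).card = i)).card =
      (Finset.univ.filter (fun bc : F × F =>
        (Finset.univ.filter (fun x : F => g.eval x = bc.1 * x + bc.2)).card = i)).card) := by
  obtain ⟨hfi, hfs⟩ := hperm
  have hgf : ∀ y : F, f.eval (g.eval y) = y := by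
    intro y; obtain ⟨x, rfl⟩ := hfs y; rw [hinv]
  have hgbij : Function.Bijective fun y : F => g.eval y := by
    constructor
    · intro y1 y2 h
      have := congrArg f.eval h
      simpa [hgf] using this
    · intro x; exact ⟨f.eval x, hinv x⟩
  have part1 : ∀ b : F, b ≠ 0 → ∀ c : F,
      (Finset.univ.filter (fun x : F => f.eval x - b * x - c = 0)).card =
      (Finset.univ.filter (fun x : F => g.eval x - b⁻¹ * x + c / b = 0)).card := by
    intro b hb c
    apply Finset.card_bij (fun x _ => f.eval x)
    · intro x hx
      simp only [Finset.mem_filter, Finset.mem_univ, true_and] at hx ⊢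
      rw [hinv]
      field_simp
      linear_combination -hx
    · intro x _ y _ h; exact hfi h
    · intro y hy
      refine ⟨g.eval y, ?_, hgf y⟩
      simp only [Finset.mem_filter, Finset.mem_univ, true_and] at hy ⊢
      rw [hgf]
      field_simp at hy
      linear_combination -hy
  refine ⟨part1, ?_⟩
  -- unique preimage counts for bijections
  have huniq : ∀ (h : F → F), Function.Bijective h → ∀ c : F,
      (Finset.univ.filter (fun x : F => h x = c)).card = 1 := by
    intro h hb c
    rw [Finset.card_eq_one]
    obtain ⟨x, hx, hu⟩ := hb.existsUnique c
    refine ⟨x, ?_⟩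
    ext y
    simp only [Finset.mem_filter, Finset.mem_univ, true_and, Finset.mem_singleton]
    exact ⟨fun hy => hu y hy, fun hy => hy ▸ hx⟩
  set φ : F × F → F × F := fun p => if p.1 = 0 then p else (p.1⁻¹, -p.2 / p.1) with hφ
  have hφφ : ∀ p, φ (φ p) = p := by
    intro ⟨b, c⟩
    by_cases hb : b = 0
    · simp [hφ, hb]
    · have hb' : b⁻¹ ≠ 0 := inv_ne_zero hb
      simp only [hφ, hb, if_false, hb', inv_inv]
      refine Prod.ext rfl ?_
      field_simp
  have key : ∀ p : F × F,
      (Finset.univ.filter (fun x : F => f.eval x = p.1 * x + p.2)).card =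
      (Finset.univ.filter (fun x : F => g.eval x = (φ p).1 * x + (φ p).2)).card := by
    intro ⟨b, c⟩
    by_cases hb : b = 0
    · simp only [hφ, hb, if_true, zero_mul, zero_add]
      rw [huniq _ ⟨hfi, hfs⟩ c, huniq _ hgbij c]
    · simp only [hφ, hb, if_false]
      have h1 := part1 b hb c
      have e1 : (Finset.univ.filter (fun x : F => f.eval x = b * x + c)) =
          (Finset.univ.filter (fun x : F => f.eval x - b * x - c = 0)) := by
        apply Finset.filter_congr
        intro x _
        constructor <;> intro h <;> linear_combination h
      have e2 : (Finset.univ.filter (fun x : F => g.eval x = b⁻¹ * x + -c / b)) =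
          (Finset.univ.filter (fun x : F => g.eval x - b⁻¹ * x + c / b = 0)) := by
        apply Finset.filter_congr
        intro x _
        constructor <;> intro h <;> (field_simp at h ⊢; linear_combination h)
      rw [e1, e2, h1]
  intro i
  apply Finset.card_bij (fun p _ => φ p)
  · intro p hp
    simp only [Finset.mem_filter, Finset.mem_univ, true_and] at hp ⊢
    rw [← key p]; exact hp
  · intro p _ q _ h
    have := congrArg φ h
    rwa [hφφ, hφφ] at this
  · intro q hq
    refine ⟨φ q, ?_, hφφ q⟩
    simp only [Finset.mem_filter, Finset.mem_univ, true_and] at hq ⊢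
    rw [key (φ q), hφφ]
    exact hq
end

section
/- Let F_q have characteristic 3 and let a ∈ F_q with a ≠ 0. Then for all b ∈ F_q and 0 ≤ i ≤ q, the number of c ∈ F_q for which x³ - a x² - b x - c = 0 has exactly i solutions in F_q equals the number of c' ∈ F_q for which x³ - x² - c' = 0 has exactly i solutions in F_q. -/
open Finset
open scoped Classical

/-!
Over a field of characteristic 3 the substitution `x = a (z + B)` with `B = b / a²` kills the
linear term, since `(z + B)³ = z³ + B³` and `-2 = 1`: it turns `x³ - a x² - b x - c` into
`a³ (z³ - z² - c')` with `c' = c / a³ - B³ - B²`. Both `x ↦ z` and `c ↦ c'` are bijections of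
the field, so they preserve the number of roots and the number of `c` with a given number of
roots.
-/

lemma cubic_affine_substitution_of_charP_three {R : Type*} [CommRing R] [CharP R 3]
    (a B z c : R) :
    (a * z + a * B) ^ 3 - a * (a * z + a * B) ^ 2 - a ^ 2 * B * (a * z + a * B)
      - a ^ 3 * (c + B ^ 3 + B ^ 2) = a ^ 3 * (z ^ 3 - z ^ 2 - c) := by
  have h3 : (3 : R) = 0 := by exact_mod_cast CharP.cast_eq_zero R 3
  linear_combination a ^ 3 * (B * z ^ 2 + (B ^ 2 - B) * z - B ^ 2) * h3

lemma card_zeros_eq_of_affine_comp {F : Type*} [Field F] [Fintype F] {f g : F → F}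
    {u v w : F} (hu : u ≠ 0) (hw : w ≠ 0) (h : ∀ z, f (u * z + v) = w * g z) :
    #{x | f x = 0} = #{z | g z = 0} := by
  symm
  refine card_equiv ((Equiv.mulLeft₀ u hu).trans (Equiv.addRight v)) fun z => ?_
  simp [h, hw]

theorem stmt7 {F : Type*} [Field F] [Fintype F] [CharP F 3]
    (a : F) (ha : a ≠ 0) (b : F) (i : ℕ) :
    (Finset.univ.filter (fun c : F =>
      (Finset.univ.filter (fun x : F => x ^ 3 - a * x ^ 2 - b * x - c = 0)).card = i)).card =
    (Finset.univ.filter (fun c' : F =>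
      (Finset.univ.filter (fun x : F => x ^ 3 - x ^ 2 - c' = 0)).card = i)).card := by
  set B := b / a ^ 2
  have hb : b = a ^ 2 * B := (mul_div_cancel₀ b (pow_ne_zero 2 ha)).symm
  have ha3 : a ^ 3 ≠ 0 := pow_ne_zero 3 ha
  have hzeros (c' : F) :
      #{x | x ^ 3 - a * x ^ 2 - b * x - a ^ 3 * (c' + B ^ 3 + B ^ 2) = 0} =
        #{z | z ^ 3 - z ^ 2 - c' = 0} :=
    card_zeros_eq_of_affine_comp ha ha3 fun z => by
      rw [hb]; exact cubic_affine_substitution_of_charP_three a B z c'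
  symm
  refine card_equiv ((Equiv.addRight (B ^ 3 + B ^ 2)).trans (Equiv.mulLeft₀ _ ha3)) fun c' => ?_
  simp [hzeros]
end

section
/- Let q = 3^m. For b ∈ F_q a nonzero square, among the q values of c ∈ F_q, exactly 2q/3 values give x³ - b x - c = 0 no solution in F_q, and exactly q/3 values give exactly three solutions; no value of c gives one or two solutions. For b = 0 or b a nonsquare, every c gives exactly one solution. -/
open Finset
open scoped Classical

theorem stmt8 {F : Type*} [Field F] [Fintype F] (m : ℕ)
    (hq : Fintype.card F = 3 ^ m) :
    (∀ b : F, b ≠ 0 → IsSquare b →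
      (Finset.univ.filter (fun c : F =>
        (Finset.univ.filter (fun x : F => x ^ 3 - b * x - c = 0)).card = 0)).card
          = 2 * Fintype.card F / 3 ∧
      (Finset.univ.filter (fun c : F =>
        (Finset.univ.filter (fun x : F => x ^ 3 - b * x - c = 0)).card = 3)).card
          = Fintype.card F / 3 ∧
      (∀ c : F,
        (Finset.univ.filter (fun x : F => x ^ 3 - b * x - c = 0)).card ≠ 1 ∧
        (Finset.univ.filter (fun x : F => x ^ 3 - b * x - c = 0)).card ≠ 2)) ∧
    (∀ b : F, (b = 0 ∨ ¬ IsSquare b) → ∀ c : F,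
      (Finset.univ.filter (fun x : F => x ^ 3 - b * x - c = 0)).card = 1) := by
  classical
  haveI : Fact (Nat.Prime 3) := ⟨by norm_num⟩
  have hm : m ≠ 0 := by
    rintro rfl
    have := Fintype.one_lt_card (α := F)
    omega
  -- characteristic 3
  have h3 : (3 : F) = 0 := by
    have hcast : ((Fintype.card F : ℕ) : F) = 0 := FiniteField.cast_card_eq_zero F
    rw [hq] at hcast
    push_cast at hcast
    exact pow_eq_zero_iff hm |>.mp hcast
  haveI hchar : CharP F 3 := by
    have h := CharP.ringChar_of_prime_eq_zero (by norm_num) h3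
    exact h ▸ ringChar.charP F
  have hsub : ∀ x y : F, (x - y) ^ 3 = x ^ 3 - y ^ 3 := fun x y => sub_pow_char x y
  -- fiber cardinality equals kernel cardinality when nonempty
  have hfib : ∀ (b c x0 : F), x0 ^ 3 - b * x0 - c = 0 →
      (univ.filter (fun x : F => x ^ 3 - b * x - c = 0)).card
        = (univ.filter (fun x : F => x ^ 3 - b * x - 0 = 0)).card := by
    intro b c x0 h0
    apply Finset.card_bij (fun x _ => x - x0)
    · intro a ha
      simp only [mem_filter, mem_univ, true_and] at ha ⊢
      rw [hsub]
      linear_combination ha - h0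
    · intro a ha b' hb' h
      exact sub_left_injective h
    · intro y hy
      simp only [mem_filter, mem_univ, true_and] at hy
      refine ⟨y + x0, ?_, by ring⟩
      simp only [mem_filter, mem_univ, true_and]
      have : (y + x0 - x0) ^ 3 = (y + x0) ^ 3 - x0 ^ 3 := hsub _ _
      simp only [add_sub_cancel_right] at this
      linear_combination hy + h0 + this + (2*(y*x0^2) + 2*(y^2*x0)) * h3
  constructor
  · rintro b hb ⟨s, hs⟩
    have hs0 : s ≠ 0 := by rintro rfl; simp at hs; exact hb hs
    have h2 : (2 : F) ≠ 0 := by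
      intro h
      have := (CharP.cast_eq_zero_iff F 3 2).mp h
      omega
    have hsne : s ≠ -s := by
      intro h
      apply hs0
      have : (2 : F) * s = 0 := by linear_combination h
      exact (mul_eq_zero.mp this).resolve_left h2
    -- kernel
    have hker : univ.filter (fun x : F => x ^ 3 - b * x - 0 = 0) = {0, s, -s} := by
      ext x
      simp only [mem_filter, mem_univ, true_and, mem_insert, mem_singleton]
      constructor
      · intro hx
        have : x * (x - s) * (x + s) = 0 := by linear_combination hx + x * hs
        rcases mul_eq_zero.mp this with h | h
        · rcases mul_eq_zero.mp h with h | h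
          · exact Or.inl h
          · exact Or.inr (Or.inl (sub_eq_zero.mp h))
        · exact Or.inr (Or.inr (eq_neg_of_add_eq_zero_left h))
      · rintro (rfl | rfl | rfl) <;> rw [hs] <;> ring
    have hkercard : (univ.filter (fun x : F => x ^ 3 - b * x - 0 = 0)).card = 3 := by
      rw [hker]
      rw [card_insert_of_notMem (by simp [hs0, Ne.symm hs0, neg_eq_zero]),
        card_insert_of_notMem (by simp [hsne]), card_singleton]
    -- dichotomy
    have hdich : ∀ c : F,
        (univ.filter (fun x : F => x ^ 3 - b * x - c = 0)).card = 0 ∨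
        (univ.filter (fun x : F => x ^ 3 - b * x - c = 0)).card = 3 := by
      intro c
      rcases (univ.filter (fun x : F => x ^ 3 - b * x - c = 0)).eq_empty_or_nonempty with h | h
      · exact Or.inl (by rw [h]; rfl)
      · obtain ⟨x0, hx0⟩ := h
        simp only [mem_filter, mem_univ, true_and] at hx0
        exact Or.inr ((hfib b c x0 hx0).trans hkercard)
    -- counting
    set fib : F → ℕ := fun c => (univ.filter (fun x : F => x ^ 3 - b * x - c = 0)).card with hfibdef
    have hsum : ∑ c : F, fib c = Fintype.card F := by
      rw [← Finset.card_univ,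
        Finset.card_eq_sum_card_fiberwise (f := fun x : F => x ^ 3 - b * x)
          (t := univ) (fun x _ => mem_univ _)]
      apply Finset.sum_congr rfl
      intro c _
      simp only [hfibdef]
      congr 1
      apply Finset.filter_congr
      intro x _
      simp [sub_eq_zero]
    set N3 := (univ.filter (fun c : F => fib c = 3)).card with hN3
    set N0 := (univ.filter (fun c : F => fib c = 0)).card with hN0
    have hpart : N0 + N3 = Fintype.card F := by
      have h := Finset.card_filter_add_card_filter_not
        (s := (univ : Finset F)) (p := fun c : F => fib c = 0)
      have heq : univ.filter (fun c : F => ¬ fib c = 0)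
          = univ.filter (fun c : F => fib c = 3) := by
        apply Finset.filter_congr
        intro c _
        rcases hdich c with h | h
        · have h' : fib c = 0 := h
          omega
        · have h' : fib c = 3 := h
          omega
      rw [heq] at h
      simpa [Finset.card_univ] using h
    have hsum3 : ∑ c : F, fib c = 3 * N3 := by
      rw [← Finset.sum_filter_add_sum_filter_not univ (fun c : F => fib c = 3)]
      have h1 : ∑ c ∈ univ.filter (fun c : F => fib c = 3), fib c = 3 * N3 := by
        rw [Finset.sum_congr rfl (fun c hc => (mem_filter.mp hc).2), Finset.sum_const,
          smul_eq_mul, hN3, mul_comm]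
      have h2 : ∑ c ∈ univ.filter (fun c : F => ¬ fib c = 3), fib c = 0 := by
        apply Finset.sum_eq_zero
        intro c hc
        rcases hdich c with h | h
        · exact h
        · exact absurd h (mem_filter.mp hc).2
      rw [h1, h2, add_zero]
    have key : 3 * N3 = Fintype.card F := hsum3 ▸ hsum
    refine ⟨by omega, by omega, ?_⟩
    intro c
    exact ⟨by rcases hdich c with h | h <;> omega, by rcases hdich c with h | h <;> omega⟩
  · rintro b hb c
    have hker1 : ∀ x : F, x ^ 3 - b * x = 0 → x = 0 := by
      intro x hx
      rcases hb with rfl | hns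
      · have : x ^ 3 = 0 := by linear_combination hx
        exact pow_eq_zero_iff (by norm_num) |>.mp this
      · by_contra hx0
        apply hns
        refine ⟨x, ?_⟩
        have : x * (x ^ 2 - b) = 0 := by linear_combination hx
        have h2 := (mul_eq_zero.mp this).resolve_left hx0
        have hxb : x ^ 2 = b := sub_eq_zero.mp h2
        rw [← hxb]; ring
    have hinj : Function.Injective (fun x : F => x ^ 3 - b * x) := by
      intro x y hxy
      simp only at hxy
      have : (x - y) ^ 3 - b * (x - y) = 0 := by
        rw [hsub]; linear_combination hxy
      have := hker1 _ this
      exact sub_eq_zero.mp this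
    obtain ⟨x0, hx0⟩ := Finite.injective_iff_surjective.mp hinj (c : F)
    simp only at hx0
    have : univ.filter (fun x : F => x ^ 3 - b * x - c = 0) = {x0} := by
      ext x
      simp only [mem_filter, mem_univ, true_and, mem_singleton]
      constructor
      · intro hx
        apply hinj
        simp only
        rw [hx0, ← sub_eq_zero]
        exact hx
      · rintro rfl
        rw [hx0]; ring
    rw [this, card_singleton]
end

section
/- Let q = 2^m with m odd, and suppose x₀ ∈ F_q is a solution of x³ - x - c = 0 for some c ∈ F_q. If c = 0 (equivalently x₀ ∈ {0,1}), the equation has exactly two solutions in F_q. Otherwise, the equation has exactly one solution if Tr(1/x₀) = Tr(1) + 1 and exactly three solutions if Tr(1/x₀) = Tr(1), where Tr is the absolute trace from F_q to F_2. -/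
/-!
Since `c = x₀³ - x₀`, in characteristic 2 the cubic factors as
`(x - x₀) (x² + x₀ x + x₀² + 1)`, and for `x₀ ≠ 0` the substitution `x = x₀ y` turns the
quadratic factor into `y² + y = 1 + x₀⁻²`. The image of `y ↦ y² + y` lies in the kernel of the
trace and both have index 2, so this equation has two solutions (`y` and `y + 1`) or none
according as `Tr (1 + x₀⁻²) = Tr 1 + Tr x₀⁻¹` vanishes or not; the root `x₀` itself is not among
them unless `x₀ = 1`, i.e. `c = 0`.
-/

open Finset
open scoped Classical

theorem AddMonoidHom.card_ker_mul_card_range {G H : Type*} [AddGroup G] [AddGroup H]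
    (f : G →+ H) : Nat.card f.ker * Nat.card f.range = Nat.card G := by
  rw [← AddSubgroup.index_ker]
  exact f.ker.card_mul_index

theorem Algebra.trace_pow_card {K L : Type*} [Field K] [Fintype K] [Field L] [Algebra K L]
    [FiniteDimensional K L] (x : L) :
    Algebra.trace K L (x ^ Fintype.card K) = Algebra.trace K L x :=
  Algebra.trace_eq_of_algEquiv (FiniteField.frobeniusAlgEquivOfAlgebraic K L) x

section CharTwo

variable {F : Type*} [Field F] [CharP F 2]

theorem sq_add_self_eq_sq_add_self_iff {y z : F} :
    z ^ 2 + z = y ^ 2 + y ↔ z = y ∨ z = y + 1 := by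
  have hfac : z ^ 2 + z - (y ^ 2 + y) = (z - y) * (z - (y + 1)) := by
    linear_combination (z - y) * (1 + y) * (CharTwo.two_eq_zero : (2 : F) = 0)
  rw [← sub_eq_zero, hfac, mul_eq_zero, sub_eq_zero, sub_eq_zero]

theorem sq_add_self_eq_zero_iff {z : F} : z ^ 2 + z = 0 ↔ z = 0 ∨ z = 1 := by
  simpa using sq_add_self_eq_sq_add_self_iff (y := (0 : F)) (z := z)

theorem cube_sub_self_eq_zero_iff {x : F} : x ^ 3 - x = 0 ↔ x = 0 ∨ x = 1 := by
  have hfac : x ^ 3 - x = x * (x - 1) ^ 2 := by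
    linear_combination (x ^ 2 - x) * (CharTwo.two_eq_zero : (2 : F) = 0)
  rw [hfac, mul_eq_zero, pow_eq_zero_iff two_ne_zero, sub_eq_zero]

theorem cube_sub_self_sub_eq_zero_iff {c x₀ x : F} (hx₀ : x₀ ^ 3 - x₀ - c = 0) (h0 : x₀ ≠ 0) :
    x ^ 3 - x - c = 0 ↔ x = x₀ ∨ (x₀⁻¹ * x) ^ 2 + x₀⁻¹ * x = 1 + x₀⁻¹ ^ 2 := by
  have hfac : x ^ 3 - x - c =
      x₀ ^ 2 * (x - x₀) * ((x₀⁻¹ * x) ^ 2 + x₀⁻¹ * x - (1 + x₀⁻¹ ^ 2)) := by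
    linear_combination hx₀ + x₀ ^ 2 * (x - x₀) * (CharTwo.two_eq_zero : (2 : F) = 0) -
      (x - x₀) * ((x₀ * x₀⁻¹ + 1) * x ^ 2 + x₀ * x - (x₀ * x₀⁻¹ + 1)) * mul_inv_cancel₀ h0
  rw [hfac, mul_eq_zero, mul_eq_zero, sub_eq_zero, sub_eq_zero, or_iff_right (pow_ne_zero 2 h0)]

end CharTwo

section FiniteCharTwo

variable {F : Type*} [Field F] [Finite F] [Algebra (ZMod 2) F]

theorem trace_sq (x : F) : Algebra.trace (ZMod 2) F (x ^ 2) = Algebra.trace (ZMod 2) F x := by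
  simpa using Algebra.trace_pow_card (K := ZMod 2) x

theorem trace_eq_zero_iff_exists_sq_add_self (a : F) :
    Algebra.trace (ZMod 2) F a = 0 ↔ ∃ y, y ^ 2 + y = a := by
  have : CharP F 2 := charP_of_injective_algebraMap' (ZMod 2) 2
  let g : F →+ F := (frobenius F 2).toAddMonoidHom + AddMonoidHom.id F
  let t : F →+ ZMod 2 := (Algebra.trace (ZMod 2) F).toAddMonoidHom
  have range_le : g.range ≤ t.ker := by
    rintro _ ⟨y, rfl⟩
    simp [g, t, frobenius_def, trace_sq, CharTwo.add_self_eq_zero]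
  have ker_g : Nat.card g.ker = 2 := by
    have hker : (g.ker : Set F) = {0, 1} := by
      ext y
      simp [g, frobenius_def, sq_add_self_eq_zero_iff]
    rw [← SetLike.coe_sort_coe, Nat.card_coe_set_eq, hker, Set.ncard_pair zero_ne_one]
  have range_t : Nat.card t.range = 2 := by
    have : t.range = ⊤ := AddMonoidHom.range_eq_top.mpr
      (LinearMap.surjective (Algebra.trace_ne_zero (ZMod 2) F))
    rw [this, AddSubgroup.card_top, Nat.card_zmod]
  have range_eq : g.range = t.ker := by
    refine AddSubgroup.eq_of_le_of_card_ge range_le ?_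
    have card_g := g.card_ker_mul_card_range
    have card_t := t.card_ker_mul_card_range
    rw [ker_g] at card_g
    rw [range_t] at card_t
    omega
  exact (SetLike.ext_iff.mp range_eq a).symm

theorem card_filter_sq_add_self_eq [Fintype F] (b : F) :
    #{y | y ^ 2 + y = b} = if Algebra.trace (ZMod 2) F b = 0 then 2 else 0 := by
  have : CharP F 2 := charP_of_injective_algebraMap' (ZMod 2) 2
  split_ifs with hb
  · obtain ⟨y, rfl⟩ := (trace_eq_zero_iff_exists_sq_add_self b).mp hb
    have hsol : ({z | z ^ 2 + z = y ^ 2 + y} : Finset F) = {y, y + 1} := by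
      ext z
      simp [sq_add_self_eq_sq_add_self_iff]
    rw [hsol, card_pair (by simp)]
  · rw [card_eq_zero, filter_eq_empty_iff]
    exact fun y _ hy => hb ((trace_eq_zero_iff_exists_sq_add_self b).mpr ⟨y, hy⟩)

end FiniteCharTwo

section Cubic

variable {F : Type*} [Field F] [Fintype F] [CharP F 2]

theorem card_filter_cube_sub_self_eq_zero : #{x : F | x ^ 3 - x = 0} = 2 := by
  have hsol : ({x | x ^ 3 - x = 0} : Finset F) = {0, 1} := by
    ext x
    simp [cube_sub_self_eq_zero_iff]
  rw [hsol, card_pair zero_ne_one]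

theorem card_filter_cube_sub_self_sub_eq {c x₀ : F} (hx₀ : x₀ ^ 3 - x₀ - c = 0) (h0 : x₀ ≠ 0)
    (h1 : x₀ ≠ 1) : #{x | x ^ 3 - x - c = 0} = #{y | y ^ 2 + y = 1 + x₀⁻¹ ^ 2} + 1 := by
  have hsol : ({x | x ^ 3 - x - c = 0} : Finset F) =
      insert x₀ ({x | (x₀⁻¹ * x) ^ 2 + x₀⁻¹ * x = 1 + x₀⁻¹ ^ 2} : Finset F) := by
    ext x
    simp [cube_sub_self_sub_eq_zero_iff hx₀ h0]
  have hx₀_notMem : x₀ ∉ ({x | (x₀⁻¹ * x) ^ 2 + x₀⁻¹ * x = 1 + x₀⁻¹ ^ 2} : Finset F) := by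
    intro h
    rw [mem_filter, inv_mul_cancel₀ h0, one_pow, add_right_inj, eq_comm, ← one_pow 2,
      CharTwo.sq_inj, inv_eq_one] at h
    exact h1 h.2
  rw [hsol, card_insert_of_notMem hx₀_notMem]
  congr 1
  exact card_nbij' (x₀⁻¹ * ·) (x₀ * ·) (fun x hx => by simpa using hx)
    (fun y hy => by simpa [inv_mul_cancel_left₀ h0] using hy)
    (fun x _ => mul_inv_cancel_left₀ h0 x) (fun y _ => inv_mul_cancel_left₀ h0 y)

end Cubic

theorem stmt9_general {F : Type*} [Field F] [Fintype F] [Algebra (ZMod 2) F]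
    (c x₀ : F) (hx₀ : x₀ ^ 3 - x₀ - c = 0) :
    (c = 0 → (Finset.univ.filter (fun x : F => x ^ 3 - x - c = 0)).card = 2) ∧
    (c ≠ 0 →
      (Algebra.trace (ZMod 2) F x₀⁻¹ = Algebra.trace (ZMod 2) F 1 + 1 →
        (Finset.univ.filter (fun x : F => x ^ 3 - x - c = 0)).card = 1) ∧
      (Algebra.trace (ZMod 2) F x₀⁻¹ = Algebra.trace (ZMod 2) F 1 →
        (Finset.univ.filter (fun x : F => x ^ 3 - x - c = 0)).card = 3)) := by
  have : CharP F 2 := charP_of_injective_algebraMap' (ZMod 2) 2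
  refine ⟨fun hc => ?_, fun hc => ?_⟩
  · simpa [hc] using card_filter_cube_sub_self_eq_zero (F := F)
  have h0 : x₀ ≠ 0 := by rintro rfl; exact hc (by linear_combination -hx₀)
  have h1 : x₀ ≠ 1 := by rintro rfl; exact hc (by linear_combination -hx₀)
  have htrace : Algebra.trace (ZMod 2) F (1 + x₀⁻¹ ^ 2) =
      Algebra.trace (ZMod 2) F 1 + Algebra.trace (ZMod 2) F x₀⁻¹ := by
    rw [map_add, trace_sq]
  rw [card_filter_cube_sub_self_sub_eq hx₀ h0 h1, card_filter_sq_add_self_eq, htrace]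
  constructor
  · intro htr
    rw [htr, ← add_assoc, CharTwo.add_self_eq_zero, zero_add, if_neg one_ne_zero]
  · intro htr
    rw [htr, CharTwo.add_self_eq_zero, if_pos rfl]

theorem stmt9 {F : Type*} [Field F] [Fintype F] [Algebra (ZMod 2) F] (m : ℕ)
    (hm : Odd m) (hq : Fintype.card F = 2 ^ m)
    (c x₀ : F) (hx₀ : x₀ ^ 3 - x₀ - c = 0) :
    (c = 0 → (Finset.univ.filter (fun x : F => x ^ 3 - x - c = 0)).card = 2) ∧
    (c ≠ 0 →
      (Algebra.trace (ZMod 2) F x₀⁻¹ = Algebra.trace (ZMod 2) F 1 + 1 →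
        (Finset.univ.filter (fun x : F => x ^ 3 - x - c = 0)).card = 1) ∧
      (Algebra.trace (ZMod 2) F x₀⁻¹ = Algebra.trace (ZMod 2) F 1 →
        (Finset.univ.filter (fun x : F => x ^ 3 - x - c = 0)).card = 3)) :=
  stmt9_general c x₀ hx₀
end

section
/- Let q = 3^m and suppose x₀ ∈ F_q is a solution of x³ - x² - c = 0 for some c ∈ F_q. If c = 0 (equivalently x₀ ∈ {0,1}), the equation has exactly two solutions in F_q. Otherwise, the equation has exactly one solution in F_q if 2x₀ + 1 is a nonsquare in F_q, and exactly three solutions if 2x₀ + 1 is a nonzero square. -/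
open Finset
open scoped Classical

theorem stmt10 {F : Type*} [Field F] [Fintype F] (m : ℕ)
    (hq : Fintype.card F = 3 ^ m)
    (c x₀ : F) (hx₀ : x₀ ^ 3 - x₀ ^ 2 - c = 0) :
    (c = 0 → (Finset.univ.filter (fun x : F => x ^ 3 - x ^ 2 - c = 0)).card = 2) ∧
    (c ≠ 0 →
      (¬ IsSquare (2 * x₀ + 1) →
        (Finset.univ.filter (fun x : F => x ^ 3 - x ^ 2 - c = 0)).card = 1) ∧
      (IsSquare (2 * x₀ + 1) → 2 * x₀ + 1 ≠ 0 →
        (Finset.univ.filter (fun x : F => x ^ 3 - x ^ 2 - c = 0)).card = 3)) := by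
  have hm : m ≠ 0 := by
    rintro rfl
    have h1 := Fintype.one_lt_card (α := F)
    omega
  have h3 : (3 : F) = 0 := by
    have h := FiniteField.cast_card_eq_zero F
    rw [hq] at h
    push_cast at h
    exact (pow_eq_zero_iff hm).mp h
  constructor
  · rintro rfl
    have hset : (Finset.univ.filter (fun x : F => x ^ 3 - x ^ 2 - 0 = 0)) = {0, 1} := by
      ext x
      simp only [Finset.mem_filter, Finset.mem_univ, true_and, Finset.mem_insert,
        Finset.mem_singleton]
      constructor
      · intro h
        have h' : x * x * (x - 1) = 0 := by linear_combination h
        rcases mul_eq_zero.mp h' with h'' | h''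
        · left
          rcases mul_eq_zero.mp h'' with h3' | h3' <;> exact h3'
        · right
          exact sub_eq_zero.mp h''
      · rintro (rfl | rfl) <;> ring
    rw [hset, Finset.card_insert_of_notMem (by simp), Finset.card_singleton]
  · intro hc
    have hx0ne : x₀ ≠ 0 := by
      rintro rfl
      exact hc (by linear_combination -hx₀)
    have h2 : (2 : F) ≠ 0 := by
      intro h
      have : (1 : F) = 0 := by linear_combination h3 - h
      exact one_ne_zero this
    constructor
    · intro hns
      have key : ∀ x : F, x ^ 3 - x ^ 2 - c
          = (x - x₀) * ((x - x₀ - 2) ^ 2 - (2 * x₀ + 1)) := by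
        intro x
        linear_combination hx₀ + (x₀ ^ 2 * (x - x₀) + x₀ * (x - x₀) ^ 2
          + (x - x₀) ^ 2 - (x - x₀)) * h3
      have hset : (Finset.univ.filter (fun x : F => x ^ 3 - x ^ 2 - c = 0)) = {x₀} := by
        ext x
        simp only [Finset.mem_filter, Finset.mem_univ, true_and, Finset.mem_singleton]
        constructor
        · intro h
          rw [key x] at h
          rcases mul_eq_zero.mp h with h' | h'
          · exact sub_eq_zero.mp h'
          · exact absurd ⟨x - x₀ - 2, by linear_combination -h'⟩ hns
        · rintro rfl; exact hx₀
      rw [hset, Finset.card_singleton]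
    · intro hsq hne0
      obtain ⟨s, hs⟩ := hsq
      have hs0 : s ≠ 0 := by
        rintro rfl
        exact hne0 (by linear_combination hs)
      have key : ∀ x : F, x ^ 3 - x ^ 2 - c
          = (x - x₀) * (x - x₀ - 2 - s) * (x - x₀ - 2 + s) := by
        intro x
        linear_combination hx₀ - (x - x₀) * hs + (x₀ ^ 2 * (x - x₀) + x₀ * (x - x₀) ^ 2
          + (x - x₀) ^ 2 - (x - x₀)) * h3
      have h2x : 2 * x₀ ≠ 0 := mul_ne_zero h2 hx0ne
      have hd1 : x₀ ≠ x₀ + 2 + s := by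
        intro h
        have hsv : s = -2 := by linear_combination -h
        apply h2x
        linear_combination hs + (s - 2) * hsv + h3
      have hd2 : x₀ ≠ x₀ + 2 - s := by
        intro h
        have hsv : s = 2 := by linear_combination h
        apply h2x
        linear_combination hs + (s + 2) * hsv + h3
      have hd3 : x₀ + 2 + s ≠ x₀ + 2 - s := by
        intro h
        apply hs0
        have : s = -s := by linear_combination h
        linear_combination -this + s * h3
      have hset : (Finset.univ.filter (fun x : F => x ^ 3 - x ^ 2 - c = 0))
          = {x₀, x₀ + 2 + s, x₀ + 2 - s} := by
        ext x
        simp only [Finset.mem_filter, Finset.mem_univ, true_and, Finset.mem_insert,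
          Finset.mem_singleton]
        constructor
        · intro h
          rw [key x] at h
          rcases mul_eq_zero.mp h with h' | h'
          · rcases mul_eq_zero.mp h' with h'' | h''
            · exact Or.inl (sub_eq_zero.mp h'')
            · exact Or.inr (Or.inl (by linear_combination h''))
          · exact Or.inr (Or.inr (by linear_combination h'))
        · rintro (rfl | rfl | rfl)
          · exact hx₀
          · rw [key]; ring
          · rw [key]; ring
      rw [hset, Finset.card_insert_of_notMem (by simp [hd1, hd2]),
        Finset.card_insert_of_notMem (by simp [hd3]), Finset.card_singleton]
end

section
/- Let q = 3^m, and let f be a polynomial over F_q with f(0) = 0 such that the triple system (F_q, B_f) is defined (i.e., every two distinct points determine a unique third collinear point on the graph of f). Then every block of B_f has the form {x₁, x₂, -x₁ - x₂} (i.e., the elements of every block sum to 0) if and only if f is F_3-linearized, meaning f(x + y) = f(x) + f(y) for all x, y ∈ F_q. -/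
open Finset Polynomial
open scoped Classical

theorem stmt18 {F : Type*} [Field F] [Fintype F] (m : ℕ)
    (hq : Fintype.card F = 3 ^ m) (f : Polynomial F) (hf0 : f.eval 0 = 0)
    (huniq : ∀ x₁ x₂ : F, x₁ ≠ x₂ →
      ∃! x₃ : F, x₃ ≠ x₁ ∧ x₃ ≠ x₂ ∧
        (f.eval x₃ - f.eval x₁) / (x₃ - x₁) = (f.eval x₂ - f.eval x₁) / (x₂ - x₁)) :
    (∀ x₁ x₂ x₃ : F, x₁ ≠ x₂ → x₁ ≠ x₃ → x₂ ≠ x₃ →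
      (f.eval x₃ - f.eval x₁) / (x₃ - x₁) = (f.eval x₂ - f.eval x₁) / (x₂ - x₁) →
      x₁ + x₂ + x₃ = 0) ↔
    (∀ x y : F, f.eval (x + y) = f.eval x + f.eval y) := by
  have hm : m ≠ 0 := by
    rintro rfl
    simp only [pow_zero] at hq
    have := Fintype.one_lt_card (α := F)
    omega
  have h3 : (3 : F) = 0 := by
    have hc : ((Fintype.card F : ℕ) : F) = 0 := FiniteField.cast_card_eq_zero F
    rw [hq] at hc
    push_cast at hc
    exact (pow_eq_zero_iff hm).mp hc
  constructor
  · intro hsum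
    have key : ∀ a b : F, a ≠ b → f.eval (-(a + b)) = -f.eval a - f.eval b := by
      intro a b hab
      obtain ⟨w, ⟨hw1, hw2, hw3⟩, hu⟩ := huniq a b hab
      have hs := hsum a b w hab (Ne.symm hw1) (Ne.symm hw2) hw3
      have hw : w = -(a + b) := by linear_combination hs
      rw [hw] at hw3
      have hab' : b - a ≠ 0 := sub_ne_zero.mpr (Ne.symm hab)
      have hd : -(a + b) - a ≠ 0 := by
        intro h
        apply hab
        linear_combination h + a * h3
      rw [div_eq_div_iff hd hab'] at hw3
      have hz : (f.eval (-(a + b)) + f.eval a + f.eval b) * (b - a) = 0 := by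
        linear_combination hw3 + (b * f.eval a - a * f.eval b) * h3
      have := (mul_eq_zero.mp hz).resolve_right hab'
      linear_combination this
    have hodd : ∀ a : F, f.eval (-a) = -f.eval a := by
      intro a
      by_cases ha : a = 0
      · simp [ha, hf0]
      · have hne : a ≠ -a := by
          intro h
          apply ha
          have h2 : (2 : F) ≠ 0 := by
            intro h2
            exact one_ne_zero (by linear_combination h3 - h2 : (1 : F) = 0)
          have h2a : (2 : F) * a = 0 := by linear_combination h
          exact (mul_eq_zero.mp h2a).resolve_left h2
        have hk := key a (-a) hne
        rw [show a + -a = (0 : F) by ring, neg_zero, hf0] at hk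
        linear_combination hk
    intro x y
    by_cases hxy : x = y
    · subst hxy
      have hx : x + x = -x := by linear_combination x * h3
      rw [hx, hodd]
      linear_combination -f.eval x * h3
    · have hk := key x y hxy
      have ho := hodd (x + y)
      linear_combination ho - hk
  · intro hadd x₁ x₂ x₃ h12 h13 h23 hslope
    obtain ⟨w, _, hu⟩ := huniq x₁ x₂ h12
    have hx3 : x₃ = w := hu x₃ ⟨Ne.symm h13, Ne.symm h23, hslope⟩
    have hodd : ∀ a : F, f.eval (-a) = -f.eval a := by
      intro a
      have h := hadd a (-a)
      rw [show a + -a = (0 : F) by ring, hf0] at h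
      linear_combination -h
    have hc1 : -x₁ - x₂ ≠ x₁ := by
      intro h
      exact h12 (by linear_combination h + x₁ * h3)
    have hc2 : -x₁ - x₂ ≠ x₂ := by
      intro h
      exact h12 (by linear_combination -h - x₂ * h3)
    have hfc : f.eval (-x₁ - x₂) = -f.eval x₁ - f.eval x₂ := by
      have h := hadd (-x₁) (-x₂)
      rw [hodd, hodd] at h
      rw [show -x₁ - x₂ = -x₁ + -x₂ by ring, h]
      ring
    have hcs : (f.eval (-x₁ - x₂) - f.eval x₁) / (-x₁ - x₂ - x₁) =
        (f.eval x₂ - f.eval x₁) / (x₂ - x₁) := by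
      rw [div_eq_div_iff (sub_ne_zero.mpr hc1) (sub_ne_zero.mpr (Ne.symm h12))]
      linear_combination (x₂ - x₁) * hfc +
        (f.eval x₂ * x₁ - f.eval x₁ * x₂) * h3
    have hcw : -x₁ - x₂ = w := hu _ ⟨hc1, hc2, hcs⟩
    linear_combination hx3 - hcw
end

section
/- Let q = 3^m and let d be a positive integer. The monomial f(x) = x^d satisfies: for every y ∈ F_q the map x ↦ (f(x+y) - f(y))/x on F_q* is 2-to-1, if and only if both (i) gcd(d - 1, q - 1) = 2 and (ii) the map g_d(y) = (y^d - 1)/(y - 1) restricted to F_q \ {1} is 2-to-1. -/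
/-!
Write `D_y(x) = ((x + y)^d - y^d) / x`. For `y = 0` this is `x^(d-1)` on `F^*`; its nonempty
fibres are cosets of the `(d-1)`-th roots of unity in the cyclic group `F^*`, so they all have
`gcd(d - 1, q - 1)` elements. For `y ≠ 0` the substitution `x = y (u - 1)` turns `D_y` on `F^*`
into `y^(d-1) g_d` on `F \ {1}`, so `D_y` is 2-to-1 exactly when `g_d` is.
-/

open Finset
open scoped Classical

section TwoToOne

variable {α α' β β' : Type*}

def IsTwoToOneOn (f : α → β) (s : Finset α) : Prop :=
  ∀ z ∈ s.image f, #{x ∈ s | f x = z} = 2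

theorem isTwoToOneOn_filter_iff [Fintype α] (f : α → β) (p : α → Prop)
    [DecidablePred p] :
    IsTwoToOneOn f {x | p x} ↔ ∀ z, (∃ x, p x ∧ f x = z) → #{x | p x ∧ f x = z} = 2 := by
  simp only [IsTwoToOneOn, mem_image, mem_filter_univ, filter_filter, forall_exists_index, and_imp]

theorem isTwoToOneOn_map_iff (e : α ↪ α') (c : β ↪ β') {f : α → β}
    {f' : α' → β'} {s : Finset α} (hf : ∀ x ∈ s, f' (e x) = c (f x)) :
    IsTwoToOneOn f' (s.map e) ↔ IsTwoToOneOn f s := by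
  have himage : (s.map e).image f' = (s.image f).map c := by
    rw [map_eq_image, image_image, map_eq_image, image_image]
    exact image_congr hf
  have hfiber (z : β) : #{x ∈ s.map e | f' x = c z} = #{x ∈ s | f x = z} := by
    rw [filter_map, card_map]
    congr 1
    exact filter_congr fun x hx => by simp [hf x hx]
  simp only [IsTwoToOneOn, himage, forall_mem_map, hfiber]

theorem isTwoToOneOn_congr {f g : α → β} {s : Finset α}
    (h : ∀ x ∈ s, f x = g x) : IsTwoToOneOn f s ↔ IsTwoToOneOn g s := by
  simpa using isTwoToOneOn_map_iff (.refl α) (.refl β) h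

end TwoToOne

theorem IsCyclic.card_filter_pow_eq {G : Type*} [CommGroup G] [Fintype G] [IsCyclic G] (n : ℕ)
    {z : G} (hz : z ∈ Set.range (· ^ n : G → G)) : #{u | u ^ n = z} = (Nat.card G).gcd n := by
  have hfiber := MonoidHom.card_fiber_eq_of_mem_range (powMonoidHom n : G →* G) hz ⟨1, one_pow n⟩
  simp only [powMonoidHom_apply] at hfiber
  rw [hfiber, ← IsCyclic.card_powMonoidHom_ker, ← SetLike.coe_sort_coe, Nat.card_eq_card_toFinset]
  congr 1
  ext u
  simp

theorem IsCyclic.isTwoToOneOn_pow_iff {G : Type*} [CommGroup G] [Fintype G] [IsCyclic G]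
    (n : ℕ) : IsTwoToOneOn (· ^ n : G → G) univ ↔ (Nat.card G).gcd n = 2 := by
  simp only [IsTwoToOneOn, mem_image, mem_univ, true_and, forall_exists_index,
    forall_apply_eq_imp_iff]
  simp only [IsCyclic.card_filter_pow_eq n ⟨_, rfl⟩]
  exact ⟨fun h => h 1, fun h _ => h⟩

section Field

variable {F : Type*} [Field F]

theorem isTwoToOneOn_pow_iff [Fintype F] (n : ℕ) :
    IsTwoToOneOn (· ^ n : F → F) {x | x ≠ 0} ↔ n.gcd (Fintype.card F - 1) = 2 := by
  let val : Fˣ ↪ F := ⟨(↑), Units.val_injective⟩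
  have hunits : univ.map val = ({x | x ≠ 0} : Finset F) := by
    ext x
    simp only [mem_map, mem_univ, true_and, mem_filter_univ]
    exact isUnit_iff_ne_zero
  have hval : ∀ u ∈ (univ : Finset Fˣ), (val u) ^ n = val (u ^ n) :=
    fun u _ => (Units.val_pow_eq_pow_val u n).symm
  rw [← hunits, isTwoToOneOn_map_iff val val (f := (· ^ n)) (f' := (· ^ n)) hval,
    IsCyclic.isTwoToOneOn_pow_iff, Nat.card_units, Nat.card_eq_fintype_card, Nat.gcd_comm]

theorem isTwoToOneOn_diffQuot_zero_iff [Fintype F] {d : ℕ} (hd : 0 < d) :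
    IsTwoToOneOn (fun x : F => ((x + 0) ^ d - 0 ^ d) / x) {x | x ≠ 0} ↔
      IsTwoToOneOn (· ^ (d - 1) : F → F) {x | x ≠ 0} := by
  refine isTwoToOneOn_congr fun x hx => ?_
  rw [mem_filter_univ] at hx
  rw [add_zero, zero_pow hd.ne', sub_zero, ← Nat.sub_add_cancel hd, pow_succ,
    mul_div_cancel_right₀ _ hx, Nat.add_sub_cancel]

theorem diffQuot_mul_sub_one {d : ℕ} (hd : 0 < d) {y u : F} (hy : y ≠ 0)
    (hu : u ≠ 1) :
    ((y * (u - 1) + y) ^ d - y ^ d) / (y * (u - 1)) = y ^ (d - 1) * ((u ^ d - 1) / (u - 1)) := by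
  have hu' : u - 1 ≠ 0 := sub_ne_zero.2 hu
  obtain ⟨k, rfl⟩ := Nat.exists_eq_add_of_lt hd
  simp only [zero_add, Nat.add_sub_cancel]
  field_simp
  ring

theorem isTwoToOneOn_diffQuot_iff [Fintype F] {d : ℕ} (hd : 0 < d) {y : F}
    (hy : y ≠ 0) :
    IsTwoToOneOn (fun x : F => ((x + y) ^ d - y ^ d) / x) {x | x ≠ 0} ↔
      IsTwoToOneOn (fun u : F => (u ^ d - 1) / (u - 1)) {u | u ≠ 1} := by
  let e : F ↪ F := ((Equiv.subRight 1).trans (Equiv.mulLeft₀ y hy)).toEmbedding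
  have he : ({u | u ≠ 1} : Finset F).map e = ({x | x ≠ 0} : Finset F) := by
    ext x
    simp only [mem_map, mem_filter_univ]
    constructor
    · rintro ⟨u, hu, rfl⟩
      exact mul_ne_zero hy (sub_ne_zero.2 hu)
    · intro hx
      refine ⟨x / y + 1, by simpa [hy] using hx, ?_⟩
      change y * (x / y + 1 - 1) = x
      rw [add_sub_cancel_right, mul_div_cancel₀ x hy]
  rw [← he]
  exact isTwoToOneOn_map_iff e (Equiv.mulLeft₀ _ (pow_ne_zero (d - 1) hy)).toEmbedding
    fun u hu => diffQuot_mul_sub_one hd hy ((mem_filter_univ u).1 hu)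

end Field

theorem stmt19_general {F : Type*} [Field F] [Fintype F] (d : ℕ) (hd : 0 < d) :
    (∀ y : F, ∀ z : F,
      (∃ x : F, x ≠ 0 ∧ ((x + y) ^ d - y ^ d) / x = z) →
      (Finset.univ.filter (fun x : F =>
        x ≠ 0 ∧ ((x + y) ^ d - y ^ d) / x = z)).card = 2) ↔
    (Nat.gcd (d - 1) (Fintype.card F - 1) = 2 ∧
      ∀ z : F,
        (∃ y : F, y ≠ 1 ∧ (y ^ d - 1) / (y - 1) = z) →
        (Finset.univ.filter (fun y : F =>
          y ≠ 1 ∧ (y ^ d - 1) / (y - 1) = z)).card = 2) := by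
  simp only [← isTwoToOneOn_filter_iff, ← isTwoToOneOn_pow_iff]
  constructor
  · intro h
    refine ⟨(isTwoToOneOn_diffQuot_zero_iff hd).1 (h 0), ?_⟩
    simpa using (isTwoToOneOn_diffQuot_iff hd one_ne_zero).1 (h 1)
  · rintro ⟨h₀, h₁⟩ y
    rcases eq_or_ne y 0 with rfl | hy
    · exact (isTwoToOneOn_diffQuot_zero_iff hd).2 h₀
    · exact (isTwoToOneOn_diffQuot_iff hd hy).2 h₁

theorem stmt19 {F : Type*} [Field F] [Fintype F] (m : ℕ)
    (hq : Fintype.card F = 3 ^ m) (d : ℕ) (hd : 0 < d) :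
    (∀ y : F, ∀ z : F,
      (∃ x : F, x ≠ 0 ∧ ((x + y) ^ d - y ^ d) / x = z) →
      (Finset.univ.filter (fun x : F =>
        x ≠ 0 ∧ ((x + y) ^ d - y ^ d) / x = z)).card = 2) ↔
    (Nat.gcd (d - 1) (Fintype.card F - 1) = 2 ∧
      ∀ z : F,
        (∃ y : F, y ≠ 1 ∧ (y ^ d - 1) / (y - 1) = z) →
        (Finset.univ.filter (fun y : F =>
          y ≠ 1 ∧ (y ^ d - 1) / (y - 1) = z)).card = 2) :=
  stmt19_general d hd
end
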